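/- arXiv:1806.02482 — 7 statements merged into one kernel-verified Lean document; each statement's English description precedes it below -/
import Mathlib

section
/- Let n ≥ 3 and 0 < r < R. Set a = −R^{n−2} r^{n−2}(R+r)/(R^{n−1} − r^{n−1}) and b = (R^{n−2} + r^{n−2})/(R^{n−1} − r^{n−1}), and define g(s) = a s^{−n+1} + b for s > 0. Then: (i) g(r)·r = −1 and g(R)·R = 1; (ii) s ↦ g(s)·s is strictly increasing on (0, ∞); (iii) −1 < g(s)·s < 1 for all s ∈ (r, R); (iv) g′(s)·s + (n−1)·g(s) = (n−1)·b for all s > 0. -/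
/-- Properties of the radial profile `g(s) = a s^{−n+1} + b` of the Cahn–Hoffman vector field
on the side facets of the torus `T_{r,R,h}`: boundary values `g(r)r = −1`, `g(R)R = 1`,
strict monotonicity of `s ↦ g(s)s`, the bounds `−1 < g(s)s < 1` on `(r,R)`, and the
differential identity `g′(s)s + (n−1)g(s) = (n−1)b`. -/
theorem torus_cahn_hoffman_profile
    (n : ℕ) (hn : 3 ≤ n) (r R : ℝ) (hr : 0 < r) (hrR : r < R)
    (a b : ℝ)
    (ha : a = -(R ^ (n - 2) * r ^ (n - 2) * (R + r)) / (R ^ (n - 1) - r ^ (n - 1)))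
    (hb : b = (R ^ (n - 2) + r ^ (n - 2)) / (R ^ (n - 1) - r ^ (n - 1)))
    (g : ℝ → ℝ) (hg : ∀ s, g s = a / s ^ (n - 1) + b) :
    g r * r = -1 ∧ g R * R = 1 ∧
    StrictMonoOn (fun s => g s * s) (Set.Ioi 0) ∧
    (∀ s, r < s → s < R → -1 < g s * s ∧ g s * s < 1) ∧
    (∀ s, 0 < s → ∃ g' : ℝ, HasDerivAt g g' s ∧
      g' * s + ((n : ℝ) - 1) * g s = ((n : ℝ) - 1) * b) := by
  obtain ⟨m, rfl⟩ : ∃ m, n = m + 3 := ⟨n - 3, by omega⟩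
  have h1 : m + 3 - 1 = m + 2 := rfl
  have h2 : m + 3 - 2 = m + 1 := rfl
  rw [h1, h2] at ha hb
  simp only [h1] at hg
  have hR : (0:ℝ) < R := hr.trans hrR
  have hD : (0:ℝ) < R ^ (m + 2) - r ^ (m + 2) := by
    have := pow_lt_pow_left₀ hrR hr.le (n := m + 2) (by omega)
    linarith
  have ha' : a < 0 := by
    rw [ha]
    apply div_neg_of_neg_of_pos _ hD
    have : 0 < R ^ (m+1) * r ^ (m+1) * (R + r) := by positivity
    linarith
  have hb' : 0 < b := by
    rw [hb]; positivity
  -- g s * s on nonzero points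
  have hfs : ∀ s : ℝ, s ≠ 0 → g s * s = a / s ^ (m + 1) + b * s := by
    intro s hs
    rw [hg]
    field_simp
    ring
  have hgr : g r * r = -1 := by
    rw [hfs r hr.ne', ha, hb]
    field_simp [hD.ne']
    ring
  have hgR : g R * R = 1 := by
    rw [hfs R hR.ne', ha, hb]
    field_simp [hD.ne']
    ring
  have hmono : StrictMonoOn (fun s => g s * s) (Set.Ioi 0) := by
    intro s hs t ht hst
    simp only [Set.mem_Ioi] at hs ht
    show g s * s < g t * t
    rw [hfs s hs.ne', hfs t ht.ne']
    have hp : s ^ (m + 1) < t ^ (m + 1) := pow_lt_pow_left₀ hst hs.le (by omega)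
    have h3 : (1:ℝ) / t ^ (m+1) < 1 / s ^ (m+1) :=
      one_div_lt_one_div_of_lt (by positivity) hp
    have h4 : a * (1 / s ^ (m+1)) < a * (1 / t ^ (m+1)) :=
      mul_lt_mul_of_neg_left h3 ha'
    have h5 : b * s < b * t := by nlinarith
    rw [mul_one_div, mul_one_div] at h4
    linarith
  refine ⟨hgr, hgR, hmono, ?_, ?_⟩
  · intro s hrs hsR
    have hs : (0:ℝ) < s := hr.trans hrs
    constructor
    · have := hmono (Set.mem_Ioi.mpr hr) (Set.mem_Ioi.mpr hs) hrs
      simp only at this; linarith [hgr]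
    · have := hmono (Set.mem_Ioi.mpr hs) (Set.mem_Ioi.mpr hR) hsR
      simp only at this; linarith [hgR]
  · intro s hs
    have hne : s ^ (m + 2) ≠ 0 := pow_ne_zero _ hs.ne'
    have base := (((hasDerivAt_pow (m + 2) s).inv hne).const_mul a).add_const b
    have hd' : HasDerivAt g (a * (-(↑(m + 2) * s ^ (m + 2 - 1)) / (s ^ (m + 2)) ^ 2)) s := by
      have heq : g = fun x : ℝ => a * (x ^ (m + 2))⁻¹ + b :=
        funext fun x => by rw [hg, div_eq_mul_inv]
      rw [heq]; exact base
    refine ⟨_, hd', ?_⟩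
    rw [hg]
    have hcast : ((m + 3 : ℕ) : ℝ) - 1 = (m : ℝ) + 2 := by push_cast; ring
    rw [hcast]
    push_cast
    field_simp
    ring
end

section
/- Let n ≥ 3, 0 < r < R, and let σ̃ be an even anisotropy on ℝ^{n−1} with polar σ̃°(x′) = sup{x′·p′ : σ̃(p′) ≤ 1}. With a = −R^{n−2} r^{n−2}(R+r)/(R^{n−1} − r^{n−1}), b = (R^{n−2} + r^{n−2})/(R^{n−1} − r^{n−1}), and g(s) = a s^{−n+1} + b, suppose x′ ∈ ℝ^{n−1} satisfies r ≤ σ̃°(x′) ≤ R. Then g(σ̃°(x′))·x′ belongs to the subdifferential of σ̃ at 0; that is, σ̃(q) ≥ (g(σ̃°(x′))x′)·q for every q ∈ ℝ^{n−1}. -/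
/-- An anisotropy: a convex, positively one-homogeneous function, positive away from 0. -/
def IsAnisotropy {m : ℕ} (τ : (Fin m → ℝ) → ℝ) : Prop :=
  ConvexOn ℝ Set.univ τ ∧ (∀ c : ℝ, 0 ≤ c → ∀ p, τ (c • p) = c * τ p) ∧
    ∀ p, p ≠ 0 → 0 < τ p

/-- The convex polar `τ°(x) = sup{x·p : τ(p) ≤ 1}` of an anisotropy on ℝᵐ. -/
noncomputable def polar {m : ℕ} (τ : (Fin m → ℝ) → ℝ) (x : Fin m → ℝ) : ℝ :=
  sSup {t | ∃ p, τ p ≤ 1 ∧ t = ∑ i, x i * p i}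

/-- On the top and bottom facets of the torus `T_{r,R,h}`, i.e. for `r ≤ σ̃°(x′) ≤ R`,
the vector `g(σ̃°(x′))·x′` belongs to the subdifferential of the even anisotropy `σ̃` at `0`:
`σ̃(q) ≥ (g(σ̃°(x′))x′)·q` for all `q`. -/
theorem torus_side_facet_cahn_hoffman
    (n : ℕ) (hn : 3 ≤ n) (m : ℕ) (hm : m = n - 1)
    (r R : ℝ) (hr : 0 < r) (hrR : r < R)
    (σt : (Fin m → ℝ) → ℝ) (hσt : IsAnisotropy σt) (heven : ∀ p, σt (-p) = σt p)
    (a b : ℝ)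
    (ha : a = -(R ^ (n - 2) * r ^ (n - 2) * (R + r)) / (R ^ (n - 1) - r ^ (n - 1)))
    (hb : b = (R ^ (n - 2) + r ^ (n - 2)) / (R ^ (n - 1) - r ^ (n - 1)))
    (g : ℝ → ℝ) (hg : ∀ s, g s = a / s ^ (n - 1) + b)
    (x' : Fin m → ℝ) (hx1 : r ≤ polar σt x') (hx2 : polar σt x' ≤ R) :
    ∀ q : Fin m → ℝ, σt q ≥ ∑ i, g (polar σt x') * x' i * q i := by
  intro q
  obtain ⟨hconv, hhom, hpos⟩ := hσt
  have hσ0 : σt 0 = 0 := by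
    have := hhom 0 le_rfl 0
    simpa using this
  have hσnn : ∀ p, 0 ≤ σt p := by
    intro p
    rcases eq_or_ne p 0 with h | h
    · simp [h, hσ0]
    · exact (hpos p h).le
  set s := polar σt x' with hs
  have hs0 : 0 < s := lt_of_lt_of_le hr hx1
  have hSbdd : BddAbove {t | ∃ p, σt p ≤ 1 ∧ t = ∑ i, x' i * p i} := by
    by_contra h
    have : s = 0 := Real.sSup_of_not_bddAbove h
    linarith
  have key : ∀ w : Fin m → ℝ, ∑ i, x' i * w i ≤ s * σt w := by
    intro w
    rcases eq_or_ne w 0 with h | h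
    · simp [h, hσ0]
    · have hw : 0 < σt w := hpos w h
      have hmem : ∑ i, x' i * ((σt w)⁻¹ • w) i ∈
          {t | ∃ p, σt p ≤ 1 ∧ t = ∑ i, x' i * p i} := by
        refine ⟨(σt w)⁻¹ • w, ?_, rfl⟩
        rw [hhom _ (by positivity), inv_mul_cancel₀ hw.ne']
      have hle := le_csSup hSbdd hmem
      have hco : ∑ i, x' i * ((σt w)⁻¹ • w) i = (σt w)⁻¹ * ∑ i, x' i * w i := by
        rw [Finset.mul_sum]
        refine Finset.sum_congr rfl fun i _ => ?_
        simp [Pi.smul_apply, smul_eq_mul]; ring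
      rw [hco] at hle
      have hle2 : (σt w)⁻¹ * ∑ i, x' i * w i ≤ s := by rw [hs, polar]; exact hle
      calc ∑ i, x' i * w i = (σt w)⁻¹ * (∑ i, x' i * w i) * σt w := by
            field_simp
        _ ≤ s * σt w := mul_le_mul_of_nonneg_right hle2 hw.le
  set T := ∑ i, x' i * q i with hT
  have hTub : T ≤ s * σt q := key q
  have hTlb : -(s * σt q) ≤ T := by
    have h1 := key (-q)
    have h2 : ∑ i, x' i * (-q) i = -T := by
      simp [hT, mul_neg, Finset.sum_neg_distrib]
    rw [h2, heven] at h1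
    linarith
  -- bounds on g s * s
  have hk : n - 1 = (n - 2) + 1 := by omega
  set k := n - 2 with hkdef
  have hD : (0:ℝ) < R ^ (k + 1) - r ^ (k + 1) := by
    have : r ^ (k+1) < R ^ (k+1) := pow_lt_pow_left₀ hrR hr.le (by omega)
    linarith
  have hR0 : (0:ℝ) < R := hr.trans hrR
  have ha' : a ≤ 0 := by
    rw [ha, hk]
    apply div_nonpos_of_nonpos_of_nonneg
    · have : (0:ℝ) ≤ R ^ k * r ^ k * (R + r) := by positivity
      linarith
    · linarith
  have hb' : 0 ≤ b := by
    rw [hb, hk]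
    apply div_nonneg
    · positivity
    · linarith
  have hval : ∀ u : ℝ, 0 < u → g u * u = a / u ^ k + b * u := by
    intro u hu
    rw [hg, hk]
    field_simp
    ring
  have hgR : g R * R = 1 := by
    rw [hval R hR0, ha, hb, hk]
    field_simp
    ring
  have hgr : g r * r = -1 := by
    rw [hval r hr, ha, hb, hk]
    field_simp
    ring
  have hmono : ∀ u v : ℝ, 0 < u → u ≤ v → g u * u ≤ g v * v := by
    intro u v hu huv
    have hv : 0 < v := lt_of_lt_of_le hu huv
    rw [hval u hu, hval v hv]
    have hpow : u ^ k ≤ v ^ k := pow_le_pow_left₀ hu.le huv k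
    have h1 : a / u ^ k ≤ a / v ^ k := by
      rw [div_le_div_iff₀ (by positivity) (by positivity)]
      have := mul_le_mul_of_nonpos_left hpow ha'
      linarith
    have h2 : b * u ≤ b * v := mul_le_mul_of_nonneg_left huv hb'
    linarith
  have hub : g s * s ≤ 1 := by
    have := hmono s R hs0 hx2
    linarith [hgR]
  have hlb : -1 ≤ g s * s := by
    have := hmono r s hr hx1
    linarith [hgr]
  have hgoal : ∑ i, g s * x' i * q i = g s * T := by
    rw [hT, Finset.mul_sum]
    exact Finset.sum_congr rfl fun i _ => by ring
  rw [ge_iff_le, hgoal]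
  rcases le_or_gt 0 (g s) with hc | hc
  · have h1 : g s * T ≤ g s * (s * σt q) := mul_le_mul_of_nonneg_left hTub hc
    have h2 : g s * s * σt q ≤ 1 * σt q := mul_le_mul_of_nonneg_right hub (hσnn q)
    nlinarith
  · have h1 : g s * T ≤ g s * (-(s * σt q)) := mul_le_mul_of_nonpos_left hTlb hc.le
    have h2 : -(g s * s) * σt q ≤ 1 * σt q :=
      mul_le_mul_of_nonneg_right (by linarith) (hσnn q)
    nlinarith
end

section
/- Define R(t) = √(1 − 4t), r(t) = R(t)/2, and h(t) = R(t) for t ∈ [0, 1/4). Then these C¹ functions satisfy, for all t ∈ [0, 1/4): R′(t) = −1/R(t) − 1/h(t), r′(t) = −1/r(t) + 1/h(t), and h′(t) = −(R(t) + r(t))/(R(t)² − r(t)²); moreover 0 < r(t) < R(t) and h(t) > 0 throughout, R(0) = 1, r(0) = 1/2, h(0) = 1, and R(t) → 0 as t → (1/4)⁻. -/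
open Filter Set Topology

/-! `R(t) = √(1 - 4t)` is the self-similar profile solving `R' = -2 / R`. With `r = R / 2` and
`h = R` all three right-hand sides of the torus system reduce to multiples of `1 / R`:
`-1/R - 1/h = -2/R`, `-1/r + 1/h = -1/R = (R/2)'` and `-(R + r)/(R² - r²) = -1/(R - r) = -2/R`. -/

section SqrtAffine

variable {a b : ℝ}

theorem hasDerivAt_sqrt_sub_mul {t : ℝ} (ht : b * t < a) :
    HasDerivAt (fun s => √(a - b * s)) (-b / (2 * √(a - b * t))) t := by
  have hlin : HasDerivAt (fun s => a - b * s) (-b) t := by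
    simpa using ((hasDerivAt_id t).const_mul b).const_sub a
  exact hlin.sqrt (sub_pos.2 ht).ne'

theorem contDiffOn_sqrt_sub_mul {n : WithTop ℕ∞} :
    ContDiffOn ℝ n (fun s => √(a - b * s)) {s | b * s < a} :=
  (contDiff_const.sub (contDiff_const.mul contDiff_id)).contDiffOn.sqrt
    fun _ hs => (sub_pos.2 hs).ne'

theorem tendsto_sqrt_sub_mul_nhdsWithin_lt (hb : b ≠ 0) :
    Tendsto (fun s => √(a - b * s)) (𝓝[<] (a / b)) (𝓝 0) := by
  have hcont : Continuous (fun s => √(a - b * s)) := by fun_prop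
  have hzero : √(a - b * (a / b)) = 0 := by rw [mul_div_cancel₀ a hb, sub_self, Real.sqrt_zero]
  exact hzero ▸ hcont.continuousAt.tendsto.mono_left nhdsWithin_le_nhds

end SqrtAffine

theorem hasDerivAt_sqrt_one_sub_four_mul {t : ℝ} (ht : t < 1 / 4) :
    HasDerivAt (fun s => √(1 - 4 * s)) (-2 / √(1 - 4 * t)) t := by
  convert hasDerivAt_sqrt_sub_mul (a := 1) (b := 4) (by linarith) using 1
  ring

section TorusODE

variable {R : ℝ → ℝ} {t : ℝ}

theorem torus_odes_of_hasDerivAt (hR : 0 < R t) (hR' : HasDerivAt R (-2 / R t) t) :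
    HasDerivAt R (-1 / R t - 1 / R t) t ∧
    HasDerivAt (fun s => R s / 2) (-1 / (R t / 2) + 1 / R t) t ∧
    HasDerivAt R (-(R t + R t / 2) / (R t ^ 2 - (R t / 2) ^ 2)) t := by
  have hne : R t ≠ 0 := hR.ne'
  refine ⟨hR'.congr_deriv (by ring), (hR'.div_const 2).congr_deriv (by ring),
    hR'.congr_deriv ?_⟩
  field_simp
  ring

end TorusODE

/-- The functions `R(t) = √(1−4t)`, `r = R/2`, `h = R` solve the torus ODE system for
`n = 3`, `μ = 1/2` on `[0, 1/4)`, with `0 < r < R`, `h > 0`, the stated initial data,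
and `R(t) → 0` as `t → (1/4)⁻`: the self-similar crystalline shrinking doughnut. -/
theorem shrinking_doughnut_ode
    (R r h : ℝ → ℝ)
    (hRdef : ∀ t, R t = Real.sqrt (1 - 4 * t))
    (hrdef : ∀ t, r t = R t / 2)
    (hhdef : ∀ t, h t = R t) :
    ContDiffOn ℝ 1 R (Set.Ico 0 (1/4)) ∧
    ContDiffOn ℝ 1 r (Set.Ico 0 (1/4)) ∧
    ContDiffOn ℝ 1 h (Set.Ico 0 (1/4)) ∧
    (∀ t ∈ Set.Ico (0:ℝ) (1/4),
      HasDerivAt R (-1 / R t - 1 / h t) t ∧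
      HasDerivAt r (-1 / r t + 1 / h t) t ∧
      HasDerivAt h (-(R t + r t) / (R t ^ 2 - r t ^ 2)) t ∧
      0 < r t ∧ r t < R t ∧ 0 < h t) ∧
    R 0 = 1 ∧ r 0 = 1/2 ∧ h 0 = 1 ∧
    Filter.Tendsto R (nhdsWithin (1/4) (Set.Iio (1/4))) (nhds 0) := by
  have hR : R = fun s => √(1 - 4 * s) := funext hRdef
  have hh : h = R := funext hhdef
  subst h
  obtain rfl : r = fun s => R s / 2 := funext hrdef
  have hRcd : ContDiffOn ℝ 1 R (Ico 0 (1 / 4)) :=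
    hR ▸ contDiffOn_sqrt_sub_mul.mono fun s hs => show 4 * s < 1 by linarith [hs.2]
  have hRlim : Tendsto R (𝓝[<] (1 / 4)) (𝓝 0) := by
    simpa [hR] using tendsto_sqrt_sub_mul_nhdsWithin_lt (a := 1) (b := 4) four_ne_zero
  refine ⟨hRcd, hRcd.div_const 2, hRcd, fun t ht => ?_, by simp [hRdef], by simp [hRdef],
    by simp [hRdef], hRlim⟩
  have hpos : 0 < R t := hRdef t ▸ Real.sqrt_pos.2 (by linarith [ht.2])
  have hR' : HasDerivAt R (-2 / R t) t := by
    rw [hR]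
    exact hasDerivAt_sqrt_one_sub_four_mul ht.2
  obtain ⟨hR_ode, hr_ode, hh_ode⟩ := torus_odes_of_hasDerivAt hpos hR'
  exact ⟨hR_ode, hr_ode, hh_ode, half_pos hpos, half_lt_self hpos, hpos⟩
end

section
/- Let μ > 0, γ ∈ (0, 1) and λ > 0. The three quantities −1 − 1/λ, −1/γ² + 1/(λγ), and −(2μ/λ)·(1+γ)/(1−γ²) are all equal if and only if μ = 1/2 and λ = γ/(1−γ). In particular, for μ ≠ 1/2 there exist no γ ∈ (0,1), λ > 0 making them equal, while for μ = 1/2 every γ ∈ (0,1) with λ = γ/(1−γ) works. -/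
/-!
Since `(1 + γ) / (1 - γ ^ 2) = 1 / (1 - γ)`, clearing denominators turns the first equality into
`(1 + γ) (λ (1 - γ) - γ) = 0`, i.e. `λ (1 - γ) = γ`. Under that relation the second quantity
collapses to `-1 / γ` and the third to `-2μ / γ`, so they agree exactly when `μ = 1/2`.
-/

section
variable {K : Type*} [Field K]

lemma one_add_div_one_sub_sq {γ : K} (hγ : 1 + γ ≠ 0) :
    (1 + γ) / (1 - γ ^ 2) = 1 / (1 - γ) := by
  rw [show (1 : K) - γ ^ 2 = (1 - γ) * (1 + γ) by ring, div_mul_cancel_right₀ hγ, one_div]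

lemma torus_compat_ab_iff {γ lam : K} (hγ : γ ≠ 0) (hγ' : 1 + γ ≠ 0) (hlam : lam ≠ 0) :
    -1 - 1 / lam = -1 / γ ^ 2 + 1 / (lam * γ) ↔ lam * (1 - γ) = γ := by
  have hsub : (-1 - 1 / lam) - (-1 / γ ^ 2 + 1 / (lam * γ))
      = (1 + γ) * (lam * (1 - γ) - γ) / (lam * γ ^ 2) := by
    field_simp
    ring
  rw [← sub_eq_zero, hsub, div_eq_zero_iff, mul_eq_zero, sub_eq_zero]
  simp [hγ, hγ', hlam]

lemma torus_compat_bc_iff [NeZero (2 : K)] {μ γ lam : K} (hγ : γ ≠ 0) (h : lam * (1 - γ) = γ) :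
    -1 / γ ^ 2 + 1 / (lam * γ) = -(2 * μ / lam) * (1 / (1 - γ)) ↔ μ = 1 / 2 := by
  have hlam : lam ≠ 0 := left_ne_zero_of_mul (h ▸ hγ)
  have hb : -1 / γ ^ 2 + 1 / (lam * γ) = -1 / γ := by
    field_simp
    linear_combination -h
  have hc : -(2 * μ / lam) * (1 / (1 - γ)) = -(2 * μ) / γ := by
    rw [neg_mul, div_mul_div_comm, mul_one, h, neg_div]
  rw [hb, hc, div_left_inj' hγ, neg_inj, eq_div_iff two_ne_zero, mul_comm, eq_comm]
end

theorem torus_self_similar_compatibility_general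
    (μ γ lam : ℝ) (hγ : γ ∈ Set.Ioo (0:ℝ) 1) (hlam : 0 < lam) :
    ((-1 - 1 / lam = -1 / γ ^ 2 + 1 / (lam * γ)) ∧
      (-1 / γ ^ 2 + 1 / (lam * γ) = -(2 * μ / lam) * ((1 + γ) / (1 - γ ^ 2)))) ↔
    (μ = 1/2 ∧ lam = γ / (1 - γ)) := by
  obtain ⟨hγ0, hγ1⟩ := hγ
  have hγ' : 1 + γ ≠ 0 := by positivity
  rw [one_add_div_one_sub_sq hγ', torus_compat_ab_iff hγ0.ne' hγ' hlam.ne',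
    eq_div_iff (sub_ne_zero.mpr hγ1.ne'), and_comm (a := μ = 1 / 2)]
  exact and_congr_right fun h => torus_compat_bc_iff hγ0.ne' h

/-- The self-similarity compatibility conditions for the torus in dimension `n = 3`:
for `μ > 0`, `γ ∈ (0,1)`, `λ > 0`, the three quantities `−1 − 1/λ`, `−1/γ² + 1/(λγ)`
and `−(2μ/λ)(1+γ)/(1−γ²)` are all equal iff `μ = 1/2` and `λ = γ/(1−γ)`. -/
theorem torus_self_similar_compatibility
    (μ γ lam : ℝ) (hμ : 0 < μ) (hγ : γ ∈ Set.Ioo (0:ℝ) 1) (hlam : 0 < lam) :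
    ((-1 - 1 / lam = -1 / γ ^ 2 + 1 / (lam * γ)) ∧
      (-1 / γ ^ 2 + 1 / (lam * γ) = -(2 * μ / lam) * ((1 + γ) / (1 - γ ^ 2)))) ↔
    (μ = 1/2 ∧ lam = γ / (1 - γ)) :=
  torus_self_similar_compatibility_general μ γ lam hγ hlam
end

section
/- Let ξ* = (3 + √17)/2, c = (ξ* − 3)/(ξ* − 1), and let r₀ > 0. Set t* = r₀²/(2c), and define r(t) = √(r₀² − 2ct) and R(t) = ξ*·r(t) for t ∈ [0, t*). Then 0 < r(t) < R(t) for all t, r(0) = r₀, R(0) = ξ* r₀, the pair (R, r) satisfies R′ = −2/(R − r) and r′ = −(R − 3r)/(r(R − r)) on [0, t*), and r(t) → 0 as t → t*⁻. In particular the ratio R(t)/r(t) is constantly ξ*, so the evolution is self-similar. -/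
/-!
The ansatz `R = ξ r` turns the sponge system into two equations for `r` alone,
`r' = -(ξ - 3) / ((ξ - 1) r)` and `ξ r' = -2 / ((ξ - 1) r)`; they are compatible exactly when
`ξ (ξ - 3) = 2`, whose root above `3` is `ξ* = (3 + √17)/2`. The common equation
`r r' = -c` integrates to `r² = r₀² - 2ct`, which vanishes at `t*`.
-/

open Filter Topology

lemma three_lt_sponge_ratio : 3 < (3 + √17) / 2 := by
  have : (3 : ℝ) < √17 := Real.lt_sqrt_of_sq_lt (by norm_num)
  linarith

lemma sponge_ratio_mul_sub_three : (3 + √17) / 2 * ((3 + √17) / 2 - 3) = 2 := by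
  have : √17 ^ 2 = 17 := Real.sq_sqrt (by norm_num)
  linear_combination this / 4

lemma hasDerivAt_sqrt_sub_two_mul {a c t : ℝ} (h : 2 * c * t < a) :
    HasDerivAt (fun s => √(a - 2 * c * s)) (-c / √(a - 2 * c * t)) t := by
  have hinner : HasDerivAt (fun s => a - 2 * c * s) (-(2 * c)) t := by
    simpa using ((hasDerivAt_id t).const_mul (2 * c)).const_sub a
  convert hinner.sqrt (sub_pos.mpr h).ne' using 1
  have : √(a - 2 * c * t) ≠ 0 := (Real.sqrt_pos.mpr (sub_pos.mpr h)).ne'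
  field_simp

lemma tendsto_sqrt_sub_two_mul_nhdsLT {a c : ℝ} (hc : c ≠ 0) :
    Tendsto (fun s => √(a - 2 * c * s)) (𝓝[<] (a / (2 * c))) (𝓝 0) := by
  have hzero : √(a - 2 * c * (a / (2 * c))) = 0 := by
    rw [mul_div_cancel₀ _ (by positivity), sub_self, Real.sqrt_zero]
  rw [← hzero]
  exact (Continuous.tendsto (by fun_prop) _).mono_left nhdsWithin_le_nhds

section SpongeAnsatz

variable {ξ c ρ : ℝ}

lemma sponge_r_rhs_of_ratio (hξ : ξ ≠ 1) (hρ : ρ ≠ 0) (hc : c = (ξ - 3) / (ξ - 1)) :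
    -(ξ * ρ - 3 * ρ) / (ρ * (ξ * ρ - ρ)) = -c / ρ := by
  subst hc
  have : ξ - 1 ≠ 0 := sub_ne_zero.mpr hξ
  field_simp

lemma sponge_R_rhs_of_ratio (hξ : ξ ≠ 1) (hρ : ρ ≠ 0) (hc : c = (ξ - 3) / (ξ - 1))
    (hquad : ξ * (ξ - 3) = 2) : -2 / (ξ * ρ - ρ) = ξ * (-c / ρ) := by
  subst hc
  have : ξ - 1 ≠ 0 := sub_ne_zero.mpr hξ
  field_simp
  linear_combination hquad

end SpongeAnsatz

/-- The self-similar shrinking sponge: with `ξ* = (3+√17)/2`, `c = (ξ*−3)/(ξ*−1)`,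
`r(t) = √(r₀² − 2ct)` and `R = ξ*·r` solve the sponge ODE system on `[0, t*)`,
`t* = r₀²/(2c)`, with `0 < r < R`, the given initial data, `r(t) → 0` as `t → t*⁻`,
and constant ratio `R/r = ξ*`. -/
theorem self_similar_sponge
    (ξs c r₀ tstar : ℝ) (hξs : ξs = (3 + Real.sqrt 17) / 2)
    (hc : c = (ξs - 3) / (ξs - 1)) (hr₀ : 0 < r₀) (hts : tstar = r₀ ^ 2 / (2 * c))
    (r R : ℝ → ℝ)
    (hrdef : ∀ t, r t = Real.sqrt (r₀ ^ 2 - 2 * c * t))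
    (hRdef : ∀ t, R t = ξs * r t) :
    (∀ t ∈ Set.Ico 0 tstar, 0 < r t ∧ r t < R t) ∧
    r 0 = r₀ ∧ R 0 = ξs * r₀ ∧
    (∀ t ∈ Set.Ico 0 tstar,
      HasDerivAt R (-2 / (R t - r t)) t ∧
      HasDerivAt r (-(R t - 3 * r t) / (r t * (R t - r t))) t) ∧
    Filter.Tendsto r (nhdsWithin tstar (Set.Iio tstar)) (nhds 0) ∧
    (∀ t ∈ Set.Ico 0 tstar, R t / r t = ξs) := by
  obtain ⟨hξ3, hquad⟩ : 3 < ξs ∧ ξs * (ξs - 3) = 2 :=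
    hξs ▸ ⟨three_lt_sponge_ratio, sponge_ratio_mul_sub_three⟩
  have hξ1 : ξs ≠ 1 := by linarith
  have hc0 : 0 < c := hc ▸ div_pos (by linarith) (by linarith)
  obtain rfl : r = fun t => √(r₀ ^ 2 - 2 * c * t) := funext hrdef
  obtain rfl : R = fun t => ξs * √(r₀ ^ 2 - 2 * c * t) := funext hRdef
  subst hts
  have hrad : ∀ t ∈ Set.Ico 0 (r₀ ^ 2 / (2 * c)), 2 * c * t < r₀ ^ 2 := fun t ht =>
    (lt_div_iff₀' (by positivity)).mp ht.2
  have hpos : ∀ t ∈ Set.Ico 0 (r₀ ^ 2 / (2 * c)), 0 < √(r₀ ^ 2 - 2 * c * t) := fun t ht =>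
    Real.sqrt_pos.mpr (sub_pos.mpr (hrad t ht))
  refine ⟨fun t ht => ⟨hpos t ht, ?_⟩, by simp [hr₀.le], by simp [hr₀.le],
    fun t ht => ?_, tendsto_sqrt_sub_two_mul_nhdsLT hc0.ne', fun t ht => ?_⟩
  · nlinarith [hpos t ht]
  · have hderiv := hasDerivAt_sqrt_sub_two_mul (hrad t ht)
    dsimp only
    rw [sponge_R_rhs_of_ratio hξ1 (hpos t ht).ne' hc hquad, sponge_r_rhs_of_ratio hξ1 (hpos t ht).ne' hc]
    exact ⟨hderiv.const_mul ξs, hderiv⟩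
  · exact mul_div_cancel_right₀ _ (hpos t ht).ne'
end

section
/- Let ξ* = (3 + √17)/2 and let T > 0. Suppose R, r : [0, T) → ℝ are C¹ with 0 < r(t) < R(t) for all t, satisfying R′ = −2/(R − r) and r′ = −(R − 3r)/(r(R − r)) on [0, T), and set ξ(t) = R(t)/r(t). If 1 < ξ(0) < ξ*, then ξ(t) < ξ* for all t ∈ [0, T) and ξ is strictly decreasing on [0, T). If ξ(0) > ξ*, then ξ(t) > ξ* for all t ∈ [0, T) and ξ is strictly increasing on [0, T). -/
/-!
Along a solution, `ξ = R / r` obeys `ξ' = (ξ² - 3ξ - 2) / (r² (ξ - 1))`, and since `ξ > 1` the sign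
of `ξ'` is that of `ξ - ξ*`. So `ξ` cannot reach `ξ*` from either side: at the first time it
would, it has been monotone away from `ξ*` up to then. Once `ξ - ξ*` has a fixed sign, so has
`ξ'`, which gives strict monotonicity.
-/

open Set

section Barrier

variable {f f' : ℝ → ℝ} {a b c : ℝ}

theorem forall_lt_of_hasDerivWithinAt_nonpos_below
    (hf : ∀ x ∈ Ico a b, HasDerivWithinAt f (f' x) (Ico a b) x)
    (hf' : ∀ x ∈ Ico a b, f x < c → f' x ≤ 0) (ha : f a < c) :
    ∀ x ∈ Ico a b, f x < c := by
  intro x hx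
  by_contra! hcx
  have hsub : Icc a x ⊆ Ico a b := Icc_subset_Ico_right hx.2
  have hcont : ContinuousOn f (Icc a x) := fun y hy =>
    ((hf y (hsub hy)).continuousWithinAt).mono hsub
  have hclosed : IsClosed (Icc a x ∩ f ⁻¹' Ici c) :=
    hcont.preimage_isClosed_of_isClosed isClosed_Icc isClosed_Ici
  obtain ⟨t₀, ⟨ht₀, hct₀⟩, hfirst⟩ :=
    (isCompact_Icc.of_isClosed_subset hclosed inter_subset_left).exists_isLeast
      ⟨x, ⟨hx.1, le_rfl⟩, hcx⟩
  have hbefore : ∀ y ∈ Ico a t₀, f y < c := fun y hy => by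
    by_contra! hcy
    exact hy.2.not_ge (hfirst ⟨⟨hy.1, hy.2.le.trans ht₀.2⟩, hcy⟩)
  have hat₀ : a < t₀ := ht₀.1.lt_of_ne (by rintro rfl; exact hct₀.not_gt ha)
  have hsub₀ : Icc a t₀ ⊆ Ico a b := (Icc_subset_Icc_right ht₀.2).trans hsub
  have hanti : AntitoneOn f (Icc a t₀) := by
    refine antitoneOn_of_hasDerivWithinAt_nonpos (f' := f') (convex_Icc a t₀) (hcont.mono
      (Icc_subset_Icc_right ht₀.2)) (fun y hy => ?_) (fun y hy => ?_) <;> rw [interior_Icc] at *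
    · exact (hf y (hsub₀ (Ioo_subset_Icc_self hy))).mono (Ioo_subset_Icc_self.trans hsub₀)
    · exact hf' y (hsub₀ (Ioo_subset_Icc_self hy)) (hbefore y (Ioo_subset_Ico_self hy))
  have := hanti (left_mem_Icc.2 hat₀.le) (right_mem_Icc.2 hat₀.le) hat₀.le
  exact hct₀.not_gt (this.trans_lt ha)

theorem forall_lt_and_strictAntiOn_of_hasDerivWithinAt_neg_below
    (hf : ∀ x ∈ Ico a b, HasDerivWithinAt f (f' x) (Ico a b) x)
    (hf' : ∀ x ∈ Ico a b, f x < c → f' x < 0) (ha : f a < c) :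
    (∀ x ∈ Ico a b, f x < c) ∧ StrictAntiOn f (Ico a b) := by
  have hlt := forall_lt_of_hasDerivWithinAt_nonpos_below hf (fun x hx h => (hf' x hx h).le) ha
  refine ⟨hlt, strictAntiOn_of_hasDerivWithinAt_neg (f' := f') (convex_Ico a b)
    (fun x hx => (hf x hx).continuousWithinAt) (fun x hx => ?_) (fun x hx => ?_)⟩
  · exact (hf x (interior_subset hx)).mono interior_subset
  · exact hf' x (interior_subset hx) (hlt x (interior_subset hx))

theorem forall_gt_and_strictMonoOn_of_hasDerivWithinAt_pos_above
    (hf : ∀ x ∈ Ico a b, HasDerivWithinAt f (f' x) (Ico a b) x)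
    (hf' : ∀ x ∈ Ico a b, c < f x → 0 < f' x) (ha : c < f a) :
    (∀ x ∈ Ico a b, c < f x) ∧ StrictMonoOn f (Ico a b) := by
  obtain ⟨hlt, hanti⟩ := forall_lt_and_strictAntiOn_of_hasDerivWithinAt_neg_below
    (f := -f) (f' := -f') (c := -c) (fun x hx => (hf x hx).neg)
    (fun x hx h => neg_neg_of_pos (hf' x hx (neg_lt_neg_iff.1 h))) (neg_lt_neg ha)
  exact ⟨fun x hx => neg_lt_neg_iff.1 (hlt x hx), fun x hx y hy hxy =>
    neg_lt_neg_iff.1 (hanti hx hy hxy)⟩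

end Barrier

theorem hasDerivWithinAt_sponge_ratio {R r : ℝ → ℝ} {s : Set ℝ} {t : ℝ}
    (hR : HasDerivWithinAt R (-2 / (R t - r t)) s t)
    (hr : HasDerivWithinAt r (-(R t - 3 * r t) / (r t * (R t - r t))) s t)
    (hr₀ : r t ≠ 0) (hRr : R t ≠ r t) :
    HasDerivWithinAt (fun u => R u / r u)
      (((R t / r t) ^ 2 - 3 * (R t / r t) - 2) / (r t ^ 2 * (R t / r t - 1))) s t := by
  refine (hR.div hr hr₀).congr_deriv ?_
  have hRr' : R t - r t ≠ 0 := sub_ne_zero.2 hRr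
  field_simp
  ring

section RatioField

variable {ρ x : ℝ}

theorem sq_sub_three_mul_sub_two_eq (x : ℝ) :
    x ^ 2 - 3 * x - 2 = (x - (3 + √17) / 2) * (x - (3 - √17) / 2) := by
  linear_combination (1 / 4 : ℝ) * Real.sq_sqrt (show (0 : ℝ) ≤ 17 by norm_num)

theorem three_sub_sqrt_seventeen_div_two_lt_one : (3 - √17) / 2 < 1 := by
  have : (1 : ℝ) < √17 := by rw [Real.lt_sqrt zero_le_one]; norm_num
  linarith

theorem sponge_ratio_field_neg (hρ : ρ ≠ 0) (hx : 1 < x) (hxs : x < (3 + √17) / 2) :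
    (x ^ 2 - 3 * x - 2) / (ρ ^ 2 * (x - 1)) < 0 := by
  have := sub_pos.2 hx
  rw [sq_sub_three_mul_sub_two_eq]
  exact div_neg_of_neg_of_pos (mul_neg_of_neg_of_pos (by linarith)
    (by linarith [three_sub_sqrt_seventeen_div_two_lt_one])) (by positivity)

theorem sponge_ratio_field_pos (hρ : ρ ≠ 0) (hx : 1 < x) (hxs : (3 + √17) / 2 < x) :
    0 < (x ^ 2 - 3 * x - 2) / (ρ ^ 2 * (x - 1)) := by
  have := sub_pos.2 hx
  rw [sq_sub_three_mul_sub_two_eq]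
  exact div_pos (mul_pos (by linarith) (by linarith [three_sub_sqrt_seventeen_div_two_lt_one]))
    (by positivity)

end RatioField

theorem sponge_ratio_dichotomy_general
    (ξs : ℝ) (hξs : ξs = (3 + Real.sqrt 17) / 2)
    (T : ℝ) (R r : ℝ → ℝ)
    (hpos : ∀ t ∈ Set.Ico 0 T, 0 < r t ∧ r t < R t)
    (hR' : ∀ t ∈ Set.Ico 0 T,
      HasDerivWithinAt R (-2 / (R t - r t)) (Set.Ico 0 T) t)
    (hr' : ∀ t ∈ Set.Ico 0 T,
      HasDerivWithinAt r (-(R t - 3 * r t) / (r t * (R t - r t))) (Set.Ico 0 T) t)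
    (ξ : ℝ → ℝ) (hξ : ∀ t, ξ t = R t / r t) :
    (1 < ξ 0 → ξ 0 < ξs →
      (∀ t ∈ Set.Ico 0 T, ξ t < ξs) ∧ StrictAntiOn ξ (Set.Ico 0 T)) ∧
    (ξs < ξ 0 →
      (∀ t ∈ Set.Ico 0 T, ξs < ξ t) ∧ StrictMonoOn ξ (Set.Ico 0 T)) := by
  subst hξs
  obtain rfl : ξ = fun t => R t / r t := funext hξ
  have hderiv (t) (ht : t ∈ Ico 0 T) := hasDerivWithinAt_sponge_ratio (hR' t ht) (hr' t ht)
    (hpos t ht).1.ne' (hpos t ht).2.ne'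
  have hone_lt (t) (ht : t ∈ Ico 0 T) : 1 < R t / r t := (one_lt_div (hpos t ht).1).2 (hpos t ht).2
  exact ⟨fun _ h₀ => forall_lt_and_strictAntiOn_of_hasDerivWithinAt_neg_below hderiv
      (fun t ht h => sponge_ratio_field_neg (hpos t ht).1.ne' (hone_lt t ht) h) h₀,
    fun h₀ => forall_gt_and_strictMonoOn_of_hasDerivWithinAt_pos_above hderiv
      (fun t ht h => sponge_ratio_field_pos (hpos t ht).1.ne' (hone_lt t ht) h) h₀⟩

/-- Dichotomy for the sponge evolution: if the ratio `ξ = R/r` of a solution of the sponge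
ODE system starts in `(1, ξ*)` it stays below `ξ*` and is strictly decreasing; if it starts
above `ξ*` it stays above `ξ*` and is strictly increasing. -/
theorem sponge_ratio_dichotomy
    (ξs : ℝ) (hξs : ξs = (3 + Real.sqrt 17) / 2)
    (T : ℝ) (hT : 0 < T) (R r : ℝ → ℝ)
    (hC1R : ContDiffOn ℝ 1 R (Set.Ico 0 T)) (hC1r : ContDiffOn ℝ 1 r (Set.Ico 0 T))
    (hpos : ∀ t ∈ Set.Ico 0 T, 0 < r t ∧ r t < R t)
    (hR' : ∀ t ∈ Set.Ico 0 T,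
      HasDerivWithinAt R (-2 / (R t - r t)) (Set.Ico 0 T) t)
    (hr' : ∀ t ∈ Set.Ico 0 T,
      HasDerivWithinAt r (-(R t - 3 * r t) / (r t * (R t - r t))) (Set.Ico 0 T) t)
    (ξ : ℝ → ℝ) (hξ : ∀ t, ξ t = R t / r t) :
    (1 < ξ 0 → ξ 0 < ξs →
      (∀ t ∈ Set.Ico 0 T, ξ t < ξs) ∧ StrictAntiOn ξ (Set.Ico 0 T)) ∧
    (ξs < ξ 0 →
      (∀ t ∈ Set.Ico 0 T, ξs < ξ t) ∧ StrictMonoOn ξ (Set.Ico 0 T)) :=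
  sponge_ratio_dichotomy_general ξs hξs T R r hpos hR' hr' ξ hξ
end

section
/- Let σ be an anisotropy on ℝⁿ with Wulff shape W = {x ∈ ℝⁿ : x·p ≤ σ(p) for all p ∈ ℝⁿ}, let λ > 0, and let d, b ∈ ℝⁿ. If b is the point of (1/λ)W closest to d + b in the Euclidean norm (i.e. b ∈ (1/λ)W and ‖(d+b) − b‖ ≤ ‖(d+b) − y‖ for all y ∈ (1/λ)W), then λb ∈ ∂σ(d); that is, σ(d + h) − σ(d) ≥ (λb)·h for all h ∈ ℝⁿ. Moreover, if d ≠ 0 then λb lies on the boundary of W. -/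
/-!
A convex positively homogeneous σ has a subgradient `w` at `d` (Hahn–Banach applied to the
strict epigraph), and homogeneity forces `w ∈ W` and `σ d ≤ ⟪w, d⟫`. The closest-point property
of `b` says that `λb` maximises `⟪d, ·⟫` over `W`, so `σ d ≤ ⟪λb, d⟫ ≤ σ d`; together with
`⟪λb, ·⟫ ≤ σ` this is the subgradient inequality. If `λb` were interior to `W`, moving it a
little in the direction `d` would make `⟪·, d⟫` exceed `σ d`.
-/

open Set Filter Topology Pointwise RealInnerProductSpace

theorem ConvexOn.exists_subgradient {E : Type*} [NormedAddCommGroup E] [NormedSpace ℝ E]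
    {f : E → ℝ} (hf : ConvexOn ℝ univ f) (hfc : Continuous f) (x : E) :
    ∃ g : StrongDual ℝ E, ∀ y, f x + g (y - x) ≤ f y := by
  have hconv : Convex ℝ {p : E × ℝ | f p.1 < p.2} := by
    simpa using hf.convex_strict_epigraph
  have hopen : IsOpen {p : E × ℝ | f p.1 < p.2} :=
    isOpen_lt (hfc.comp continuous_fst) continuous_snd
  obtain ⟨φ, hφ⟩ := geometric_hahn_banach_open_point hconv hopen (x := (x, f x)) (lt_irrefl (f x))
  set ℓ : StrongDual ℝ E := φ.comp (ContinuousLinearMap.inl ℝ E ℝ)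
  set c : ℝ := φ (0, 1)
  have hφ_apply : ∀ y t, φ (y, t) = ℓ y + t * c := fun y t => by
    rw [show ((y, t) : E × ℝ) = (y, 0) + t • (0, 1) by simp, map_add, map_smul]
    rfl
  have hc : c < 0 := by
    have := hφ (x, f x + 1) (by simp)
    rw [hφ_apply, hφ_apply] at this
    linarith
  refine ⟨(-c)⁻¹ • ℓ, fun y => le_of_forall_gt_imp_ge_of_dense fun t ht => ?_⟩
  have := hφ (y, t) ht
  rw [hφ_apply, hφ_apply] at this
  rw [smul_apply, map_sub, smul_eq_mul, ← le_sub_iff_add_le',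
    inv_mul_le_iff₀ (neg_pos.mpr hc)]
  linarith

theorem ConvexOn.add_le_of_posHomogeneous {E : Type*} [AddCommGroup E] [Module ℝ E]
    {σ : E → ℝ} (hconv : ConvexOn ℝ univ σ) (hhom : ∀ c : ℝ, 0 ≤ c → ∀ p, σ (c • p) = c * σ p)
    (x y : E) : σ (x + y) ≤ σ x + σ y :=
  calc σ (x + y) = σ ((2 : ℝ) • ((1 / 2 : ℝ) • x + (1 / 2 : ℝ) • y)) := by congr 1; module
    _ = 2 * σ ((1 / 2 : ℝ) • x + (1 / 2 : ℝ) • y) := hhom 2 zero_le_two _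
    _ ≤ 2 * ((1 / 2 : ℝ) • σ x + (1 / 2 : ℝ) • σ y) := by
      gcongr; exact hconv.2 trivial trivial (by norm_num) (by norm_num) (by norm_num)
    _ = σ x + σ y := by simp only [smul_eq_mul]; ring

theorem EuclideanSpace.sum_mul_eq_inner {ι : Type*} [Fintype ι] (x p : EuclideanSpace ℝ ι) :
    ∑ i, x i * p i = ⟪x, p⟫ := by
  simp [PiLp.inner_apply, mul_comm]

section WulffShape

variable {F : Type*} [NormedAddCommGroup F] [InnerProductSpace ℝ F]

def wulffShape (σ : F → ℝ) : Set F := {x | ∀ p, ⟪x, p⟫ ≤ σ p}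

theorem convex_wulffShape (σ : F → ℝ) : Convex ℝ (wulffShape σ) := by
  rw [wulffShape, ofPred_forall]
  exact convex_iInter fun p => convex_halfSpace_le (innerₛₗ ℝ |>.flip p).isLinear (σ p)

theorem isClosed_wulffShape (σ : F → ℝ) : IsClosed (wulffShape σ) := by
  rw [wulffShape, ofPred_forall]
  exact isClosed_iInter fun p => isClosed_le (continuous_id.inner continuous_const) continuous_const

theorem exists_mem_wulffShape_le_inner [CompleteSpace F] {σ : F → ℝ}
    (hconv : ConvexOn ℝ univ σ) (hcont : Continuous σ)
    (hhom : ∀ c : ℝ, 0 ≤ c → ∀ p, σ (c • p) = c * σ p) (d : F) :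
    ∃ w ∈ wulffShape σ, σ d ≤ ⟪w, d⟫ := by
  obtain ⟨g, hg⟩ := hconv.exists_subgradient hcont d
  refine ⟨(InnerProductSpace.toDual ℝ F).symm g, fun p => ?_, ?_⟩
  · have := hg (d + p)
    rw [add_sub_cancel_left] at this
    rw [InnerProductSpace.toDual_symm_apply]
    linarith [hconv.add_le_of_posHomogeneous hhom d p]
  · have hσ0 : σ 0 = 0 := by simpa using hhom 0 le_rfl 0
    have := hg 0
    rw [zero_sub, map_neg, hσ0] at this
    rw [InnerProductSpace.toDual_symm_apply]
    linarith

theorem inner_le_sub_of_mem_wulffShape {σ : F → ℝ} {c d : F} (hc : c ∈ wulffShape σ)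
    (hσ : σ d ≤ ⟪c, d⟫) (h : F) : ⟪c, h⟫ ≤ σ (d + h) - σ d := by
  have := hc (d + h)
  rw [inner_add_right] at this
  linarith

theorem mem_frontier_wulffShape {σ : F → ℝ} {c d : F} (hc : c ∈ wulffShape σ)
    (hσ : σ d ≤ ⟪c, d⟫) (hd : d ≠ 0) : c ∈ frontier (wulffShape σ) := by
  rw [(isClosed_wulffShape σ).frontier_eq]
  refine ⟨hc, fun hint => ?_⟩
  have hpath : Tendsto (fun t : ℝ => c + t • d) (𝓝 0) (𝓝 c) := by
    simpa using (by fun_prop : Continuous fun t : ℝ => c + t • d).tendsto 0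
  have hnear : ∀ᶠ t in 𝓝[>] (0 : ℝ), c + t • d ∈ wulffShape σ :=
    nhdsWithin_le_nhds (hpath (mem_interior_iff_mem_nhds.mp hint))
  obtain ⟨t, htW, ht⟩ := (hnear.and self_mem_nhdsWithin).exists
  have := htW d
  rw [inner_add_left, real_inner_smul_left] at this
  nlinarith [mul_pos (mem_Ioi.mp ht) (real_inner_self_pos.mpr hd)]

theorem IsMinOn.real_inner_sub_sub_nonpos {K : Set F} (hK : Convex ℝ K) {u v : F} (hv : v ∈ K)
    (hmin : IsMinOn (fun y => ‖u - y‖) K v) {w : F} (hw : w ∈ K) : ⟪u - v, w - v⟫ ≤ 0 := by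
  have : Nonempty K := ⟨⟨v, hv⟩⟩
  refine (norm_eq_iInf_iff_real_inner_le_zero hK hv).1 (le_antisymm ?_ ?_) w hw
  · exact le_ciInf fun y => hmin y.2
  · exact ciInf_le ⟨0, forall_mem_range.2 fun _ => norm_nonneg _⟩ (⟨v, hv⟩ : K)

theorem inner_le_inner_smul_of_forall_norm_le {K : Set F} (hK : Convex ℝ K) {r : ℝ} (hr : 0 < r)
    {d b : F} (hb : b ∈ r⁻¹ • K) (hclosest : ∀ y ∈ r⁻¹ • K, ‖(d + b) - b‖ ≤ ‖(d + b) - y‖)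
    {w : F} (hw : w ∈ K) : ⟪d, w⟫ ≤ ⟪d, r • b⟫ := by
  have := IsMinOn.real_inner_sub_sub_nonpos (hK.smul r⁻¹) hb hclosest (smul_mem_smul_set hw)
  rw [add_sub_cancel_right, inner_sub_right, real_inner_smul_right, sub_nonpos,
    inv_mul_le_iff₀ hr] at this
  rwa [real_inner_smul_right]

end WulffShape

theorem bregman_variable_cahn_hoffman_general
    (n : ℕ) (σ : EuclideanSpace ℝ (Fin n) → ℝ)
    (hconv : ConvexOn ℝ Set.univ σ)
    (hhom : ∀ c : ℝ, 0 ≤ c → ∀ p, σ (c • p) = c * σ p)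
    (W : Set (EuclideanSpace ℝ (Fin n)))
    (hW : W = {x | ∀ p, (∑ i, x i * p i) ≤ σ p})
    (lam : ℝ) (hlam : 0 < lam) (d b : EuclideanSpace ℝ (Fin n))
    (hbW : b ∈ lam⁻¹ • W)
    (hbclosest : ∀ y ∈ lam⁻¹ • W, ‖(d + b) - b‖ ≤ ‖(d + b) - y‖) :
    (∀ h, σ (d + h) - σ d ≥ ∑ i, (lam • b) i * h i) ∧
    (d ≠ 0 → lam • b ∈ frontier W) := by
  simp only [EuclideanSpace.sum_mul_eq_inner] at hW ⊢
  change W = wulffShape σ at hW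
  subst hW
  have hcont : Continuous σ := continuousOn_univ.mp (hconv.continuousOn isOpen_univ)
  have hcW : lam • b ∈ wulffShape σ := by
    rwa [mem_smul_set_iff_inv_smul_mem₀ (inv_ne_zero hlam.ne'), inv_inv] at hbW
  obtain ⟨w, hwW, hσw⟩ := exists_mem_wulffShape_le_inner hconv hcont hhom d
  have hσd : σ d ≤ ⟪lam • b, d⟫ := by
    rw [real_inner_comm] at hσw ⊢
    exact hσw.trans <| inner_le_inner_smul_of_forall_norm_le (convex_wulffShape σ) hlam hbW
      hbclosest hwW
  exact ⟨inner_le_sub_of_mem_wulffShape hcW hσd, mem_frontier_wulffShape hcW hσd⟩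

/-- At convergence of the split Bregman iteration, the Bregman variable is a discrete
Cahn–Hoffman vector field: if `b` is the closest point of `(1/λ)W` to `d + b`, then
`λb ∈ ∂σ(d)`, and if `d ≠ 0` then `λb` lies on the boundary of the Wulff shape `W`. -/
theorem bregman_variable_cahn_hoffman
    (n : ℕ) (σ : EuclideanSpace ℝ (Fin n) → ℝ)
    (hconv : ConvexOn ℝ Set.univ σ)
    (hhom : ∀ c : ℝ, 0 ≤ c → ∀ p, σ (c • p) = c * σ p)
    (hpos : ∀ p, p ≠ 0 → 0 < σ p)
    (W : Set (EuclideanSpace ℝ (Fin n)))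
    (hW : W = {x | ∀ p, (∑ i, x i * p i) ≤ σ p})
    (lam : ℝ) (hlam : 0 < lam) (d b : EuclideanSpace ℝ (Fin n))
    (hbW : b ∈ lam⁻¹ • W)
    (hbclosest : ∀ y ∈ lam⁻¹ • W, ‖(d + b) - b‖ ≤ ‖(d + b) - y‖) :
    (∀ h, σ (d + h) - σ d ≥ ∑ i, (lam • b) i * h i) ∧
    (d ≠ 0 → lam • b ∈ frontier W) :=
  bregman_variable_cahn_hoffman_general n σ hconv hhom W hW lam hlam d b hbW hbclosest
end
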